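/- Let D be a bounded open set in the complex plane, z, z0 ∈ ℂ, and 0 < δ < 1/2. Then there is a constant η(D) > 0, depending only on D, such that ∫_{D \ B(z0,δ)} 1/(|ζ − z| · |ζ − z0|²) dA(ζ) ≤ η(D)/δ, where dA is Lebesgue area measure and B(z0,δ) is the open disc of radius δ centered at z0. -/

import Mathlib

/-!
Split the plane at the disc `B(z, δ)`. Inside it `|ζ - z0| ≥ δ`, so the integrand is at most
`δ⁻² |ζ - z|⁻¹`, whose integral over `B(z, δ)` is `2π/δ`. Outside it both distances are at least
`δ`, and AM-GM gives `1/(a b²) ≤ (a⁻³ + 2 b⁻³)/3`; since `∫_{|w| ≥ δ} |w|⁻³ dA = 2π/δ`, this part is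
also at most `2π/δ`. Hence `η = 4π` works.
-/

open MeasureTheory Metric Set Real

theorem Complex.integral_comp_norm_sub (c : ℂ) (g : ℝ → ℝ) :
    ∫ ζ : ℂ, g ‖ζ - c‖ = 2 * π * ∫ y in Ioi 0, y * g y := by
  rw [integral_sub_right_eq_self (fun ζ => g ‖ζ‖) c, integral_fun_norm_addHaar]
  simp [Measure.real]
  ring

theorem Complex.integrable_comp_norm_sub (c : ℂ) {g : ℝ → ℝ}
    (hg : IntegrableOn (fun y => y * g y) (Ioi 0)) : Integrable (fun ζ : ℂ => g ‖ζ - c‖) :=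
  ((integrable_fun_norm_addHaar volume).2 (by simpa using hg)).comp_sub_right c

theorem eqOn_mul_indicator_Iio_inv (r : ℝ) :
    EqOn (fun y : ℝ => y * (Iio r).indicator (·⁻¹) y) ((Iio r).indicator 1) (Ioi 0) := by
  intro y (hy : 0 < y)
  by_cases h : y < r <;> simp [h, hy.ne']

theorem eqOn_mul_indicator_Ici_inv_pow_three (r : ℝ) :
    EqOn (fun y : ℝ => y * (Ici r).indicator (fun y => (y ^ 3)⁻¹) y)
      ((Ici r).indicator (fun y => y ^ (-2 : ℝ))) (Ioi 0) := by
  intro y (hy : 0 < y)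
  by_cases h : r ≤ y
  · simp only [indicator_of_mem (mem_Ici.2 h), rpow_neg hy.le]
    norm_cast
    field_simp
  · simp [h]

section RadialKernels

variable (c : ℂ)

theorem indicator_ball_inv_norm_sub (r : ℝ) :
    (ball c r).indicator (fun ζ => ‖ζ - c‖⁻¹) =
      fun ζ => (Iio r).indicator (·⁻¹) ‖ζ - c‖ := by
  have hball : ball c r = (‖· - c‖) ⁻¹' Iio r := by ext; simp [dist_eq_norm]
  ext ζ
  rw [hball]
  exact indicator_comp_right (fun ζ => ‖ζ - c‖) (g := (·⁻¹))

theorem indicator_compl_ball_inv_norm_sub_pow (r : ℝ) (n : ℕ) :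
    (ball c r)ᶜ.indicator (fun ζ => (‖ζ - c‖ ^ n)⁻¹) =
      fun ζ => (Ici r).indicator (fun y => (y ^ n)⁻¹) ‖ζ - c‖ := by
  have hcompl : (ball c r)ᶜ = (‖· - c‖) ⁻¹' Ici r := by ext; simp [dist_eq_norm]
  ext ζ
  rw [hcompl]
  exact indicator_comp_right (fun ζ => ‖ζ - c‖) (g := fun y => (y ^ n)⁻¹)

theorem integrable_indicator_ball_inv_norm_sub (r : ℝ) :
    Integrable ((ball c r).indicator fun ζ => ‖ζ - c‖⁻¹) := by
  rw [indicator_ball_inv_norm_sub]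
  refine Complex.integrable_comp_norm_sub c ?_
  rw [integrableOn_congr_fun (eqOn_mul_indicator_Iio_inv r) measurableSet_Ioi, IntegrableOn,
    integrable_indicator_iff measurableSet_Iio, IntegrableOn,
    Measure.restrict_restrict measurableSet_Iio, Iio_inter_Ioi]
  exact integrableOn_const (by simp)

theorem integral_indicator_ball_inv_norm_sub {r : ℝ} (hr : 0 ≤ r) :
    ∫ ζ, (ball c r).indicator (fun ζ => ‖ζ - c‖⁻¹) ζ = 2 * π * r := by
  rw [indicator_ball_inv_norm_sub, Complex.integral_comp_norm_sub,
    setIntegral_congr_fun measurableSet_Ioi (eqOn_mul_indicator_Iio_inv r),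
    integral_indicator measurableSet_Iio, Measure.restrict_restrict measurableSet_Iio,
    Iio_inter_Ioi]
  simp [hr]

theorem integrable_indicator_compl_ball_inv_norm_sub_pow_three {r : ℝ} (hr : 0 < r) :
    Integrable ((ball c r)ᶜ.indicator fun ζ => (‖ζ - c‖ ^ 3)⁻¹) := by
  rw [indicator_compl_ball_inv_norm_sub_pow]
  refine Complex.integrable_comp_norm_sub c ?_
  rw [integrableOn_congr_fun (eqOn_mul_indicator_Ici_inv_pow_three r) measurableSet_Ioi]
  refine ((integrable_indicator_iff measurableSet_Ici).2 ?_).integrableOn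
  rw [integrableOn_Ici_iff_integrableOn_Ioi]
  exact integrableOn_Ioi_rpow_of_lt (by norm_num) hr

theorem integral_indicator_compl_ball_inv_norm_sub_pow_three {r : ℝ} (hr : 0 < r) :
    ∫ ζ, (ball c r)ᶜ.indicator (fun ζ => (‖ζ - c‖ ^ 3)⁻¹) ζ = 2 * π / r := by
  rw [indicator_compl_ball_inv_norm_sub_pow, Complex.integral_comp_norm_sub,
    setIntegral_congr_fun measurableSet_Ioi (eqOn_mul_indicator_Ici_inv_pow_three r),
    integral_indicator measurableSet_Ici, Measure.restrict_restrict measurableSet_Ici,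
    inter_eq_left.2 (Ici_subset_Ioi.2 hr), integral_Ici_eq_integral_Ioi,
    integral_Ioi_rpow_of_lt (by norm_num) hr]
  norm_num [rpow_neg_one]
  ring

end RadialKernels

theorem mul_sq_le_am_gm {u v : ℝ} (hu : 0 ≤ u) (hv : 0 ≤ v) :
    u * v ^ 2 ≤ (u ^ 3 + 2 * v ^ 3) / 3 := by
  nlinarith [mul_nonneg (sq_nonneg (u - v)) (add_nonneg hu (mul_nonneg zero_le_two hv))]

theorem one_div_mul_sq_le {x y : ℝ} (hx : 0 ≤ x) (hy : 0 ≤ y) :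
    1 / (x * y ^ 2) ≤ ((x ^ 3)⁻¹ + 2 * (y ^ 3)⁻¹) / 3 := by
  rw [one_div, mul_inv]
  simpa only [inv_pow] using mul_sq_le_am_gm (inv_nonneg.2 hx) (inv_nonneg.2 hy)

theorem one_div_mul_sq_le_of_le {x y δ : ℝ} (hx : 0 ≤ x) (hδ : 0 < δ) (hδy : δ ≤ y) :
    1 / (x * y ^ 2) ≤ (δ ^ 2)⁻¹ * x⁻¹ := by
  rw [one_div, mul_inv, mul_comm]
  gcongr

noncomputable def kernelMajorant (z z0 : ℂ) (δ : ℝ) (ζ : ℂ) : ℝ :=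
  (δ ^ 2)⁻¹ * (ball z δ).indicator (fun ζ => ‖ζ - z‖⁻¹) ζ +
    3⁻¹ * (ball z δ)ᶜ.indicator (fun ζ => (‖ζ - z‖ ^ 3)⁻¹) ζ +
    2 / 3 * (ball z0 δ)ᶜ.indicator (fun ζ => (‖ζ - z0‖ ^ 3)⁻¹) ζ

section KernelMajorant

variable (z z0 : ℂ) {δ : ℝ}

theorem kernelMajorant_nonneg (ζ : ℂ) : 0 ≤ kernelMajorant z z0 δ ζ := by
  unfold kernelMajorant
  refine add_nonneg (add_nonneg ?_ ?_) ?_ <;>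
    exact mul_nonneg (by positivity) (indicator_nonneg (fun _ _ => by positivity) _)

theorem integrable_kernelMajorant (hδ : 0 < δ) : Integrable (kernelMajorant z z0 δ) :=
  (((integrable_indicator_ball_inv_norm_sub z δ).const_mul _).add
    ((integrable_indicator_compl_ball_inv_norm_sub_pow_three z hδ).const_mul _)).add
    ((integrable_indicator_compl_ball_inv_norm_sub_pow_three z0 hδ).const_mul _)

theorem integral_kernelMajorant (hδ : 0 < δ) : ∫ ζ, kernelMajorant z z0 δ ζ = 4 * π / δ := by
  have h1 := integrable_indicator_ball_inv_norm_sub z δ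
  have h3 := integrable_indicator_compl_ball_inv_norm_sub_pow_three z hδ
  have h3' := integrable_indicator_compl_ball_inv_norm_sub_pow_three z0 hδ
  unfold kernelMajorant
  rw [integral_add _ (h3'.const_mul _), integral_add (h1.const_mul _) (h3.const_mul _),
    integral_const_mul, integral_const_mul, integral_const_mul,
    integral_indicator_ball_inv_norm_sub z hδ.le,
    integral_indicator_compl_ball_inv_norm_sub_pow_three z hδ,
    integral_indicator_compl_ball_inv_norm_sub_pow_three z0 hδ]
  · field_simp
    ring
  · exact (h1.const_mul _).add (h3.const_mul _)

theorem one_div_norm_sub_mul_sq_le_kernelMajorant (hδ : 0 < δ) {ζ : ℂ} (hζ : ζ ∉ ball z0 δ) :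
    1 / (‖ζ - z‖ * ‖ζ - z0‖ ^ 2) ≤ kernelMajorant z z0 δ ζ := by
  have hδζ : δ ≤ ‖ζ - z0‖ := by simpa [dist_eq_norm] using hζ
  unfold kernelMajorant
  by_cases hz : ζ ∈ ball z δ
  · rw [indicator_of_mem hz]
    refine le_add_of_le_of_nonneg (le_add_of_le_of_nonneg ?_ ?_) ?_
    · exact one_div_mul_sq_le_of_le (norm_nonneg _) hδ hδζ
    all_goals exact mul_nonneg (by positivity) (indicator_nonneg (fun _ _ => by positivity) _)
  · rw [indicator_of_notMem hz, indicator_of_mem (mem_compl hz), indicator_of_mem (mem_compl hζ)]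
    linarith [one_div_mul_sq_le (norm_nonneg (ζ - z)) (norm_nonneg (ζ - z0))]

end KernelMajorant

theorem stmt0_general (D : Set ℂ) :
    ∃ η : ℝ, 0 < η ∧ ∀ (z z0 : ℂ) (δ : ℝ), 0 < δ → δ < 1/2 →
      (∫ ζ in D \ ball z0 δ, 1 / (‖ζ - z‖ * ‖ζ - z0‖ ^ 2)) ≤ η / δ := by
  refine ⟨4 * π, by positivity, fun z z0 δ hδ _ => ?_⟩
  have hle : ∀ᵐ ζ ∂volume.restrict (D \ ball z0 δ),
      1 / (‖ζ - z‖ * ‖ζ - z0‖ ^ 2) ≤ kernelMajorant z z0 δ ζ :=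
    ae_restrict_of_ae_restrict_of_subset (sdiff_subset_compl D _)
      (ae_restrict_of_forall_mem measurableSet_ball.compl fun _ hζ =>
        one_div_norm_sub_mul_sq_le_kernelMajorant z z0 hδ hζ)
  calc ∫ ζ in D \ ball z0 δ, 1 / (‖ζ - z‖ * ‖ζ - z0‖ ^ 2)
      ≤ ∫ ζ in D \ ball z0 δ, kernelMajorant z z0 δ ζ :=
        integral_mono_of_nonneg (ae_of_all _ fun _ => by positivity)
          (integrable_kernelMajorant z z0 hδ).integrableOn hle
    _ ≤ ∫ ζ, kernelMajorant z z0 δ ζ :=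
        setIntegral_le_integral (integrable_kernelMajorant z z0 hδ)
          (ae_of_all _ (kernelMajorant_nonneg z z0))
    _ = 4 * π / δ := integral_kernelMajorant z z0 hδ

/-- For a bounded open `D ⊆ ℂ` there is a constant `η(D) > 0` such that for all
`z, z0 ∈ ℂ` and `0 < δ < 1/2`,
`∫_{D \ B(z0,δ)} 1/(|ζ − z| |ζ − z0|²) dA(ζ) ≤ η(D)/δ`. -/
theorem stmt0 (D : Set ℂ) (hD : IsOpen D) (hDb : Bornology.IsBounded D) :
    ∃ η : ℝ, 0 < η ∧ ∀ (z z0 : ℂ) (δ : ℝ), 0 < δ → δ < 1/2 →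
      (∫ ζ in D \ ball z0 δ, 1 / (‖ζ - z‖ * ‖ζ - z0‖ ^ 2)) ≤ η / δ :=
  stmt0_general D
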